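/- arXiv:2605.20289 — 11 statements merged into one kernel-verified Lean document; each statement's English description precedes it below -/
import Mathlib

section
/- Let d be a positive natural number, z : Fin d → ℝ, and let p_i = exp(z_i) / Σ_j exp(z_j) denote the softmax output. Let ε ∈ [0,1) and Δ ≥ 0. Suppose ẽ : Fin d → ℝ satisfies ẽ_j > 0 and |ẽ_j − exp(z_j)| ≤ ε·exp(z_j) for every j, and suppose p̃_i = ẽ_i / (Σ_j ẽ_j) + δ_i with |δ_i| ≤ Δ·p_i. Then for every index i, |p̃_i − p_i| ≤ (2/(1−ε))·(ε + Δ)·p_i. -/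
/-- Error bound for NLS-Softmax: a relative error `ε` on the exponentials plus an
additive division-neuron error `δ i` bounded by `Δ * p i` induces at most a
`(2/(1-ε))*(ε+Δ)` relative error on the softmax outputs. -/
theorem nls_softmax_error_bound
    (d : ℕ) (hd : 0 < d) (z : Fin d → ℝ) (ε Δ : ℝ)
    (hε0 : 0 ≤ ε) (hε1 : ε < 1) (hΔ : 0 ≤ Δ)
    (p : Fin d → ℝ) (hp : ∀ i, p i = Real.exp (z i) / ∑ j, Real.exp (z j))
    (etil : Fin d → ℝ) (hpos : ∀ j, 0 < etil j)
    (happrox : ∀ j, |etil j - Real.exp (z j)| ≤ ε * Real.exp (z j))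
    (δ : Fin d → ℝ) (hδ : ∀ i, |δ i| ≤ Δ * p i)
    (ptil : Fin d → ℝ) (hptil : ∀ i, ptil i = etil i / (∑ j, etil j) + δ i) :
    ∀ i, |ptil i - p i| ≤ (2 / (1 - ε)) * (ε + Δ) * p i := by
  intro i
  set S := ∑ j, Real.exp (z j) with hS
  set T := ∑ j, etil j with hT
  have hne : (Finset.univ : Finset (Fin d)).Nonempty := ⟨⟨0, hd⟩, Finset.mem_univ _⟩
  have hSpos : 0 < S := Finset.sum_pos (fun j _ => Real.exp_pos _) hne
  have hTpos : 0 < T := Finset.sum_pos (fun j _ => hpos j) hne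
  have hST : |T - S| ≤ ε * S := by
    have h1 : T - S = ∑ j, (etil j - Real.exp (z j)) := by
      rw [Finset.sum_sub_distrib]
    rw [h1]
    calc |∑ j, (etil j - Real.exp (z j))| ≤ ∑ j, |etil j - Real.exp (z j)| :=
          Finset.abs_sum_le_sum_abs _ _
      _ ≤ ∑ j, ε * Real.exp (z j) := Finset.sum_le_sum (fun j _ => happrox j)
      _ = ε * S := by rw [← Finset.mul_sum]
  have hTlb : (1 - ε) * S ≤ T := by
    have := (abs_le.mp hST).1
    nlinarith
  have hpi : p i = Real.exp (z i) / S := hp i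
  have hepos : 0 < Real.exp (z i) := Real.exp_pos _
  have hppos : 0 < p i := by rw [hpi]; positivity
  have hεS : 0 < 1 - ε := by linarith
  have h1 : |etil i / T - p i| ≤ 2 * ε / (1 - ε) * p i := by
    rw [hpi]
    have key : etil i / T - Real.exp (z i) / S =
        ((etil i - Real.exp (z i)) * S - Real.exp (z i) * (T - S)) / (T * S) := by
      field_simp
      ring
    rw [key, abs_div, abs_of_pos (mul_pos hTpos hSpos)]
    have hnum : |(etil i - Real.exp (z i)) * S - Real.exp (z i) * (T - S)| ≤
        2 * ε * Real.exp (z i) * S := by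
      calc |(etil i - Real.exp (z i)) * S - Real.exp (z i) * (T - S)|
          ≤ |(etil i - Real.exp (z i)) * S| + |Real.exp (z i) * (T - S)| := abs_sub _ _
        _ = |etil i - Real.exp (z i)| * S + Real.exp (z i) * |T - S| := by
            rw [abs_mul, abs_mul, abs_of_pos hSpos, abs_of_pos hepos]
        _ ≤ ε * Real.exp (z i) * S + Real.exp (z i) * (ε * S) := by
            gcongr
            exact happrox i
        _ = 2 * ε * Real.exp (z i) * S := by ring
    rw [div_le_iff₀ (mul_pos hTpos hSpos)]
    have hTS : (1 - ε) * S * S ≤ T * S := by nlinarith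
    calc |(etil i - Real.exp (z i)) * S - Real.exp (z i) * (T - S)|
        ≤ 2 * ε * Real.exp (z i) * S := hnum
      _ = 2 * ε / (1 - ε) * (Real.exp (z i) / S) * ((1 - ε) * S * S) := by
          field_simp
      _ ≤ 2 * ε / (1 - ε) * (Real.exp (z i) / S) * (T * S) := by
          have h0 : 0 ≤ 2 * ε / (1 - ε) * (Real.exp (z i) / S) := by positivity
          exact mul_le_mul_of_nonneg_left hTS h0
  have h2 := hδ i
  have hfinal : |ptil i - p i| ≤ 2 * ε / (1 - ε) * p i + Δ * p i := by
    rw [hptil i]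
    calc |etil i / T + δ i - p i| ≤ |etil i / T - p i| + |δ i| := by
          have : etil i / T + δ i - p i = (etil i / T - p i) + δ i := by ring
          rw [this]; exact abs_add_le _ _
      _ ≤ 2 * ε / (1 - ε) * p i + Δ * p i := add_le_add h1 h2
  have hgoal : 2 * ε / (1 - ε) * p i + Δ * p i ≤ (2 / (1 - ε)) * (ε + Δ) * p i := by
    rw [div_mul_eq_mul_div, div_mul_eq_mul_div, div_mul_eq_mul_div, div_add' _ _ _ hεS.ne',
      div_le_div_iff₀ hεS hεS]
    nlinarith [mul_nonneg hΔ hppos.le, hεS,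
      mul_nonneg (mul_nonneg hΔ hppos.le) hεS.le,
      mul_nonneg (mul_nonneg (mul_nonneg hΔ hppos.le) hε0) hεS.le]
  linarith
end

section
/- Let d be a positive natural number, z : Fin d → ℝ, and let p_i = exp(z_i)/Σ_j exp(z_j). Let ε ∈ [0,1). If ẽ : Fin d → ℝ satisfies ẽ_j > 0 and |ẽ_j − exp(z_j)| ≤ ε·exp(z_j) for every j, then for every i, |ẽ_i/(Σ_j ẽ_j) − p_i| ≤ (2ε/(1−ε))·p_i. -/
/-- Quantization-free softmax perturbation bound: a uniform relative error `ε` on the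
exponentials induces at most a `2ε/(1-ε)` relative error on the softmax outputs. -/
theorem softmax_relative_perturbation_bound
    (d : ℕ) (hd : 0 < d) (z : Fin d → ℝ) (ε : ℝ)
    (hε0 : 0 ≤ ε) (hε1 : ε < 1)
    (p : Fin d → ℝ) (hp : ∀ i, p i = Real.exp (z i) / ∑ j, Real.exp (z j))
    (etil : Fin d → ℝ) (hpos : ∀ j, 0 < etil j)
    (happrox : ∀ j, |etil j - Real.exp (z j)| ≤ ε * Real.exp (z j)) :
    ∀ i, |etil i / (∑ j, etil j) - p i| ≤ (2 * ε / (1 - ε)) * p i := by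
  intro i
  set S : ℝ := ∑ j, Real.exp (z j) with hS
  set T : ℝ := ∑ j, etil j with hT
  have hSpos : 0 < S :=
    Finset.sum_pos (fun j _ => Real.exp_pos _) (by simp [Finset.univ_nonempty_iff, Fin.pos_iff_nonempty.mp hd])
  have hTpos : 0 < T := Finset.sum_pos (fun j _ => hpos j) (by simp [Finset.univ_nonempty_iff, Fin.pos_iff_nonempty.mp hd])
  have hlo : ∀ j, (1 - ε) * Real.exp (z j) ≤ etil j := by
    intro j
    have := (abs_le.mp (happrox j)).1
    nlinarith [this]
  have hhi : ∀ j, etil j ≤ (1 + ε) * Real.exp (z j) := by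
    intro j
    have := (abs_le.mp (happrox j)).2
    nlinarith [this]
  have hTlo : (1 - ε) * S ≤ T := by
    rw [hS, hT, Finset.mul_sum]
    exact Finset.sum_le_sum fun j _ => hlo j
  have hThi : T ≤ (1 + ε) * S := by
    rw [hS, hT, Finset.mul_sum]
    exact Finset.sum_le_sum fun j _ => hhi j
  have hei : 0 < Real.exp (z i) := Real.exp_pos _
  have heps : (0:ℝ) < 1 - ε := by linarith
  rw [hp i, abs_le]
  have hetili := hpos i
  constructor
  · -- lower bound: etil i / T ≥ (1-ε) e_i / ((1+ε) S)
    have h1 : (1 - ε) * Real.exp (z i) / ((1 + ε) * S) ≤ etil i / T :=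
      div_le_div₀ (le_of_lt hetili) (hlo i) hTpos hThi
    have h2 : (1 - ε) * Real.exp (z i) / ((1 + ε) * S) - Real.exp (z i) / S =
        -(2 * ε / (1 + ε) * (Real.exp (z i) / S)) := by
      field_simp
      ring
    have h3 : 2 * ε / (1 + ε) * (Real.exp (z i) / S) ≤
        2 * ε / (1 - ε) * (Real.exp (z i) / S) := by
      gcongr <;> first | positivity | linarith
    linarith
  · -- upper bound
    have h1 : etil i / T ≤ (1 + ε) * Real.exp (z i) / ((1 - ε) * S) :=
      div_le_div₀ (by positivity) (hhi i) (by positivity) hTlo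
    have h2 : (1 + ε) * Real.exp (z i) / ((1 - ε) * S) - Real.exp (z i) / S =
        2 * ε / (1 - ε) * (Real.exp (z i) / S) := by
      field_simp
      ring
    linarith
end

section
/- Let ε ∈ [0,1), Δ ≥ 0, and x ∈ ℝ. Write σ(x) = 1/(1 + exp(−x)) and SiLU(x) = x·σ(x). Suppose ẽ > 0 satisfies |ẽ − exp(−x)| ≤ ε·exp(−x), and let σ̃ = 1/(1 + ẽ) + δ_div with |δ_div| ≤ Δ, and f̃ = x·σ̃. Then |f̃ − SiLU(x)| ≤ |x|·(2ε/(1−ε)) + |x|·Δ. -/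
/-! The approximate and exact sigmoids differ by `(e - ẽ) / ((1 + ẽ)(1 + e))` with `e = exp(-x)`,
which is at most `ε e / (1 + e) ≤ ε` in absolute value; the division error adds at most `Δ`, and
the factor `x` multiplies both. The looser constant `2ε/(1-ε)` dominates `ε`. -/

lemma abs_one_div_one_add_sub_one_div_one_add_le {a b ε : ℝ} (ha : 0 ≤ a) (hb : 0 < b)
    (h : |a - b| ≤ ε * b) : |1 / (1 + a) - 1 / (1 + b)| ≤ ε := by
  have hε : 0 ≤ ε := nonneg_of_mul_nonneg_left ((abs_nonneg _).trans h) hb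
  have hden : 0 < (1 + a) * (1 + b) := by positivity
  have hdiff : 1 / (1 + a) - 1 / (1 + b) = (b - a) / ((1 + a) * (1 + b)) := by
    field_simp
    ring
  rw [hdiff, abs_div, abs_of_pos hden, abs_sub_comm, div_le_iff₀ hden]
  calc |a - b| ≤ ε * b := h
    _ ≤ ε * ((1 + a) * (1 + b)) := by gcongr; nlinarith

lemma le_two_mul_div_one_sub {ε : ℝ} (hε0 : 0 ≤ ε) (hε1 : ε < 1) : ε ≤ 2 * ε / (1 - ε) := by
  rw [le_div_iff₀ (sub_pos.mpr hε1)]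
  nlinarith

lemma abs_mul_add_sub_mul_le {x s t δ C D : ℝ} (hst : |s - t| ≤ C) (hδ : |δ| ≤ D) :
    |x * (s + δ) - x * t| ≤ |x| * C + |x| * D := by
  calc |x * (s + δ) - x * t| = |x| * |(s - t) + δ| := by rw [← abs_mul]; ring_nf
    _ ≤ |x| * (C + D) := by gcongr; exact (abs_add_le _ _).trans (add_le_add hst hδ)
    _ = |x| * C + |x| * D := mul_add _ _ _

theorem nls_silu_error_bound_general
    (ε Δ x : ℝ) (hε0 : 0 ≤ ε) (hε1 : ε < 1)
    (etil : ℝ) (hpos : 0 < etil)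
    (he : |etil - Real.exp (-x)| ≤ ε * Real.exp (-x))
    (δdiv : ℝ) (hδ : |δdiv| ≤ Δ)
    (σtil : ℝ) (hσ : σtil = 1 / (1 + etil) + δdiv)
    (ftil : ℝ) (hf : ftil = x * σtil) :
    |ftil - x * (1 / (1 + Real.exp (-x)))| ≤ |x| * (2 * ε / (1 - ε)) + |x| * Δ := by
  have hsigma : |1 / (1 + etil) - 1 / (1 + Real.exp (-x))| ≤ 2 * ε / (1 - ε) :=
    (abs_one_div_one_add_sub_one_div_one_add_le hpos.le (Real.exp_pos _) he).trans
      (le_two_mul_div_one_sub hε0 hε1)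
  subst hf hσ
  exact abs_mul_add_sub_mul_le hsigma hδ

/-- Error bound for NLS-SiLU: a relative error `ε` on the approximation of `exp(-x)`
plus an additive division-neuron error bounded by `Δ` gives
`|f̃ - SiLU x| ≤ |x|·(2ε/(1-ε)) + |x|·Δ`. -/
theorem nls_silu_error_bound
    (ε Δ x : ℝ) (hε0 : 0 ≤ ε) (hε1 : ε < 1) (hΔ : 0 ≤ Δ)
    (etil : ℝ) (hpos : 0 < etil)
    (he : |etil - Real.exp (-x)| ≤ ε * Real.exp (-x))
    (δdiv : ℝ) (hδ : |δdiv| ≤ Δ)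
    (σtil : ℝ) (hσ : σtil = 1 / (1 + etil) + δdiv)
    (ftil : ℝ) (hf : ftil = x * σtil) :
    |ftil - x * (1 / (1 + Real.exp (-x)))| ≤ |x| * (2 * ε / (1 - ε)) + |x| * Δ :=
  nls_silu_error_bound_general ε Δ x hε0 hε1 etil hpos he δdiv hδ σtil hσ ftil hf
end

section
/- Let ε = 3.63×10⁻³ and Δ = 2⁻¹². For every x ∈ [−5, 5], if ẽ > 0 satisfies |ẽ − exp(−x)| ≤ ε·exp(−x), σ̃ = 1/(1 + ẽ) + δ_div with |δ_div| ≤ Δ, and f̃ = x·σ̃, then |f̃ − x/(1 + exp(−x))| ≤ 0.038. -/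
/-! Since `1/(1+a) - 1/(1+b) = (b-a)/((1+a)(1+b))` and `b ≤ (1+a)(1+b)` for `a ≥ 0`, a relative
error `ε` in the exponential becomes an absolute error at most `ε` in the sigmoid. Adding the
division error `Δ` and multiplying by `|x| ≤ 5` gives `5 (ε + Δ) ≈ 0.0194 ≤ 0.038`. -/

lemma abs_one_div_one_add_sub_le {a b ε : ℝ} (ha : 0 ≤ a) (hb : 0 < b)
    (hab : |a - b| ≤ ε * b) : |1 / (1 + a) - 1 / (1 + b)| ≤ ε := by
  have ha' : 0 < 1 + a := by linarith
  have hb' : 0 < 1 + b := by linarith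
  have hε : 0 ≤ ε := nonneg_of_mul_nonneg_left ((abs_nonneg _).trans hab) hb
  have hdiff : 1 / (1 + a) - 1 / (1 + b) = (b - a) / ((1 + a) * (1 + b)) := by
    field_simp
    ring
  rw [hdiff, abs_div, abs_of_pos (mul_pos ha' hb'), div_le_iff₀ (mul_pos ha' hb'), abs_sub_comm]
  calc |a - b| ≤ ε * b := hab
    _ ≤ ε * ((1 + a) * (1 + b)) := by gcongr; nlinarith

lemma abs_mul_approx_sigmoid_sub_silu_le {x X ε Δ e δ : ℝ} (hx : |x| ≤ X) (he : 0 ≤ e)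
    (hexp : |e - Real.exp (-x)| ≤ ε * Real.exp (-x)) (hδ : |δ| ≤ Δ) :
    |x * (1 / (1 + e) + δ) - x / (1 + Real.exp (-x))| ≤ X * (ε + Δ) := by
  have hsig : |1 / (1 + e) - 1 / (1 + Real.exp (-x))| ≤ ε :=
    abs_one_div_one_add_sub_le he (Real.exp_pos _) hexp
  calc |x * (1 / (1 + e) + δ) - x / (1 + Real.exp (-x))|
      = |x| * |(1 / (1 + e) - 1 / (1 + Real.exp (-x))) + δ| := by
        rw [← abs_mul]
        ring_nf
    _ ≤ X * (ε + Δ) :=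
        mul_le_mul hx ((abs_add_le _ _).trans (add_le_add hsig hδ)) (abs_nonneg _)
          ((abs_nonneg x).trans hx)

/-- Numerical corollary of the NLS-SiLU error bound for the recommended configuration
`ε = 3.63e-3`, `Δ = 2⁻¹²`: for all `x ∈ [-5,5]`, the approximation error is at most
`0.038`. -/
theorem nls_silu_numerical_bound
    (x : ℝ) (hx : x ∈ Set.Icc (-5 : ℝ) 5)
    (etil : ℝ) (hpos : 0 < etil)
    (he : |etil - Real.exp (-x)| ≤ (3.63e-3 : ℝ) * Real.exp (-x))
    (δdiv : ℝ) (hδ : |δdiv| ≤ (2 : ℝ) ^ (-12 : ℤ))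
    (σtil : ℝ) (hσ : σtil = 1 / (1 + etil) + δdiv)
    (ftil : ℝ) (hf : ftil = x * σtil) :
    |ftil - x / (1 + Real.exp (-x))| ≤ 0.038 := by
  subst hf hσ
  calc _ ≤ 5 * (3.63e-3 + (2 : ℝ) ^ (-12 : ℤ)) :=
        abs_mul_approx_sigmoid_sub_silu_le (abs_le.mpr hx) hpos.le he hδ
    _ ≤ 0.038 := by norm_num
end

section
/- Let d be a positive natural number, x : Fin d → ℝ, ε ≥ 0, and set R = sqrt((1/d)·Σ_j x_j² + ε) and y_i = x_i/R. Let 0 ≤ ε_pol < 1 and Δ_div, Δ_mul ≥ 0. Suppose R̃ = R·(1 + η) with |η| ≤ ε_pol, q̃ = 1/R̃ + δ_div with |δ_div| ≤ Δ_div, and ỹ_i = x_i·q̃ + δ_mul with |δ_mul| ≤ Δ_mul. Then for every i with x_i ≠ 0, |ỹ_i − y_i|/|y_i| ≤ ε_pol/(1 − ε_pol) + Δ_div·R + Δ_mul·R/|x_i|. -/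
/-- Error decomposition for NLS-RMSNorm: PolarNorm relative error `ε_pol`,
division-neuron additive error `Δ_div`, and multiplication additive error `Δ_mul`
combine into the stated per-coordinate relative error bound. -/
theorem nls_rmsnorm_error_decomposition
    (d : ℕ) (hd : 0 < d) (x : Fin d → ℝ) (ε : ℝ) (hε : 0 ≤ ε)
    (R : ℝ) (hR : R = Real.sqrt ((1 / (d : ℝ)) * ∑ j, (x j) ^ 2 + ε))
    (y : Fin d → ℝ) (hy : ∀ i, y i = x i / R)
    (εpol Δdiv Δmul : ℝ) (hεpol0 : 0 ≤ εpol) (hεpol1 : εpol < 1)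
    (hΔdiv : 0 ≤ Δdiv) (hΔmul : 0 ≤ Δmul)
    (η : ℝ) (hη : |η| ≤ εpol)
    (Rtil : ℝ) (hRtil : Rtil = R * (1 + η))
    (δdiv : ℝ) (hδdiv : |δdiv| ≤ Δdiv)
    (qtil : ℝ) (hqtil : qtil = 1 / Rtil + δdiv)
    (δmul : Fin d → ℝ) (hδmul : ∀ i, |δmul i| ≤ Δmul)
    (ytil : Fin d → ℝ) (hytil : ∀ i, ytil i = x i * qtil + δmul i) :
    ∀ i, x i ≠ 0 →
      |ytil i - y i| / |y i| ≤ εpol / (1 - εpol) + Δdiv * R + Δmul * R / |x i| := by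
  intro i hxi
  have hxi2 : 0 < (x i) ^ 2 := by positivity
  have hsum : 0 < ∑ j, (x j) ^ 2 :=
    lt_of_lt_of_le hxi2 (Finset.single_le_sum (f := fun j => (x j) ^ 2) (fun j _ => by positivity) (Finset.mem_univ i))
  have hdpos : (0:ℝ) < (d : ℝ) := by exact_mod_cast hd
  have hRpos : 0 < R := by
    rw [hR]
    apply Real.sqrt_pos.mpr
    have : 0 < (1 / (d:ℝ)) * ∑ j, (x j) ^ 2 := by positivity
    linarith
  have habs := abs_le.mp hη
  have h1η : 0 < 1 + η := by linarith
  have h1e : 0 < 1 - εpol := by linarith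
  have h1e' : 1 - εpol ≤ 1 + η := by linarith
  have hxabs : 0 < |x i| := abs_pos.mpr hxi
  have hyabs : |y i| = |x i| / R := by
    rw [hy, abs_div, abs_of_pos hRpos]
  have key : ytil i - y i = x i * δdiv + δmul i - x i * η / (R * (1 + η)) := by
    rw [hytil, hqtil, hRtil, hy]
    field_simp
    ring
  have hbound : |ytil i - y i| ≤ |x i| * Δdiv + Δmul + |x i| * εpol / (R * (1 - εpol)) := by
    rw [key]
    calc |x i * δdiv + δmul i - x i * η / (R * (1 + η))|
        ≤ |x i * δdiv| + |δmul i| + |x i * η / (R * (1 + η))| := by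
          apply (abs_sub _ _).trans
          gcongr
          exact abs_add_le _ _
      _ ≤ |x i| * Δdiv + Δmul + |x i| * εpol / (R * (1 - εpol)) := by
          gcongr ?_ + ?_ + ?_
          · rw [abs_mul]; gcongr
          · exact hδmul i
          · rw [abs_div, abs_mul]
            have hden : |R * (1 + η)| = R * (1 + η) := abs_of_pos (by positivity)
            rw [hden]
            apply div_le_div₀ (by positivity) (by gcongr) (by positivity) (by gcongr)
  rw [hyabs, div_le_iff₀ (by positivity)]
  refine hbound.trans (le_of_eq ?_)
  field_simp
  ring
end

section
/- Let H > 0 and let K be a positive natural number; set h = 2H/K and nodes x_i = −H + i·h for i = 0, …, K. Let ẽ : [−H, H] → ℝ be the piecewise-linear interpolant of exp, i.e., on each subinterval [x_i, x_{i+1}] it is the affine function agreeing with exp at x_i and x_{i+1}. Then for every x ∈ [−H, H], |ẽ(x) − exp(x)| ≤ (h²/8)·exp(h)·exp(x). -/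
/-!
On a cell `[a, a + h]` the exponential lies below its chord by convexity. Conversely,
`y ↦ e^(a+h) y² / 2 - e^y` is convex on `(-∞, a + h]`, so the gap between the chord and `exp`
at the point with barycentric weights `1 - t, t` is at most `e^(a+h) / 2 · t (1 - t) h² ≤
e^(a+h) h² / 8 = (h² / 8) e^h e^a ≤ (h² / 8) e^h e^x`.
-/

open Set Real

theorem jensen_gap_le_of_convexOn_mul_sq_sub {s : Set ℝ} {f : ℝ → ℝ} {c : ℝ}
    (hg : ConvexOn ℝ s fun y => c * y ^ 2 - f y) {a b μ ν : ℝ} (ha : a ∈ s) (hb : b ∈ s)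
    (hμ : 0 ≤ μ) (hν : 0 ≤ ν) (hμν : μ + ν = 1) :
    μ * f a + ν * f b - f (μ * a + ν * b) ≤ c * μ * ν * (b - a) ^ 2 := by
  have key := hg.2 ha hb hμ hν hμν
  simp only [smul_eq_mul] at key
  obtain rfl : ν = 1 - μ := by linarith
  -- the quadratic terms cancel since `μ a² + ν b² - (μ a + ν b)² = μ ν (b - a)²`
  linear_combination key

section Chord

variable {s : Set ℝ} {f : ℝ → ℝ} {a h x : ℝ}

theorem chord_eq_combo (hh : h ≠ 0) :
    f a + (f (a + h) - f a) / h * (x - a) =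
      (1 - (x - a) / h) * f a + (x - a) / h * f (a + h) := by
  field_simp
  ring

theorem self_eq_combo (hh : h ≠ 0) : x = (1 - (x - a) / h) * a + (x - a) / h * (a + h) := by
  field_simp
  ring

theorem ConvexOn.apply_le_chord (hf : ConvexOn ℝ s f) (ha : a ∈ s) (hb : a + h ∈ s)
    (hh : 0 < h) (hx : x ∈ Icc a (a + h)) :
    f x ≤ f a + (f (a + h) - f a) / h * (x - a) := by
  have ht : (x - a) / h ≤ 1 := (div_le_one hh).2 (by linarith [hx.2])
  have hjensen :=
    hf.2 ha hb (sub_nonneg.2 ht) (div_nonneg (sub_nonneg.2 hx.1) hh.le) (sub_add_cancel _ _)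
  simp only [smul_eq_mul, ← self_eq_combo hh.ne'] at hjensen
  rwa [chord_eq_combo hh.ne']

theorem chord_sub_le_of_convexOn_mul_sq_sub {c : ℝ} (hc : 0 ≤ c)
    (hg : ConvexOn ℝ s fun y => c * y ^ 2 - f y) (ha : a ∈ s) (hb : a + h ∈ s)
    (hh : 0 < h) (hx : x ∈ Icc a (a + h)) :
    f a + (f (a + h) - f a) / h * (x - a) - f x ≤ c * h ^ 2 / 4 := by
  set t := (x - a) / h
  have ht : t ≤ 1 := (div_le_one hh).2 (by linarith [hx.2])
  have gap := jensen_gap_le_of_convexOn_mul_sq_sub hg ha hb (sub_nonneg.2 ht)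
    (div_nonneg (sub_nonneg.2 hx.1) hh.le) (sub_add_cancel _ _)
  rw [← self_eq_combo hh.ne', add_sub_cancel_left] at gap
  rw [chord_eq_combo hh.ne']
  calc _ ≤ c * (1 - t) * t * h ^ 2 := gap
    _ = c * h ^ 2 / 4 - c * h ^ 2 * (t - 1 / 2) ^ 2 := by ring
    _ ≤ c * h ^ 2 / 4 := sub_le_self _ (by positivity)

end Chord

theorem convexOn_exp_mul_sq_sub_exp (b : ℝ) :
    ConvexOn ℝ (Iic b) fun y => exp b / 2 * y ^ 2 - exp y := by
  refine convexOn_of_hasDerivWithinAt2_nonneg (convex_Iic b) (by fun_prop)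
    (f' := fun y => exp b * y - exp y) (f'' := fun y => exp b - exp y) (fun y _ => ?_)
    (fun y _ => ?_) (fun y hy => ?_)
  · exact (((hasDerivAt_pow 2 y).const_mul (exp b / 2)).sub
      (hasDerivAt_exp y)).hasDerivWithinAt.congr_deriv (by ring)
  · exact (((hasDerivAt_id y).const_mul (exp b)).sub
      (hasDerivAt_exp y)).hasDerivWithinAt.congr_deriv (by ring)
  · rw [interior_Iic] at hy
    exact sub_nonneg.2 (exp_le_exp.2 hy.le)

theorem abs_exp_chord_sub_exp_le {a h x : ℝ} (hh : 0 < h) (hx : x ∈ Icc a (a + h)) :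
    |exp a + (exp (a + h) - exp a) / h * (x - a) - exp x| ≤ h ^ 2 / 8 * exp h * exp x := by
  have hlower := convexOn_exp.apply_le_chord (mem_univ a) (mem_univ _) hh hx
  have hupper := chord_sub_le_of_convexOn_mul_sq_sub (by positivity)
    (convexOn_exp_mul_sq_sub_exp (a + h)) (by simp [hh.le]) (mem_Iic.2 le_rfl) hh hx
  rw [abs_of_nonneg (sub_nonneg.2 hlower)]
  calc _ ≤ exp (a + h) / 2 * h ^ 2 / 4 := hupper
    _ = h ^ 2 / 8 * exp h * exp a := by rw [add_comm, exp_add]; ring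
    _ ≤ h ^ 2 / 8 * exp h * exp x := by gcongr; exact hx.1

theorem exists_lt_mem_Icc_add_mul {a h x : ℝ} {K : ℕ} (hK : 0 < K)
    (hx : x ∈ Icc a (a + K * h)) : ∃ i < K, x ∈ Icc (a + i * h) (a + (i + 1) * h) := by
  induction K, hK using Nat.le_induction with
  | base => exact ⟨0, one_pos, by simpa using hx⟩
  | succ K _ ih =>
    by_cases hxK : x ≤ a + K * h
    · obtain ⟨i, hiK, hxi⟩ := ih ⟨hx.1, hxK⟩
      exact ⟨i, hiK.trans K.lt_succ_self, hxi⟩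
    · exact ⟨K, K.lt_succ_self, (not_le.1 hxK).le, by simpa using hx.2⟩

/-- PWL-Exp relative error bound (Lemma 1): the piecewise-linear interpolant of `exp`
on `[-H, H]` with `K` equal subintervals of width `h = 2H/K` satisfies
`|ẽ(x) - exp x| ≤ (h²/8)·e^h·exp x` at every point of the interval. -/
theorem pwl_exp_relative_error_bound
    (H : ℝ) (hH : 0 < H) (K : ℕ) (hK : 0 < K)
    (h : ℝ) (hh : h = 2 * H / K)
    (node : ℕ → ℝ) (hnode : ∀ i : ℕ, node i = -H + i * h)
    (etil : ℝ → ℝ)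
    (hinterp : ∀ i : ℕ, i < K → ∀ x ∈ Set.Icc (node i) (node (i + 1)),
      etil x = Real.exp (node i) +
        (Real.exp (node (i + 1)) - Real.exp (node i)) / h * (x - node i)) :
    ∀ x ∈ Set.Icc (-H) H,
      |etil x - Real.exp x| ≤ (h ^ 2 / 8) * Real.exp h * Real.exp x := by
  intro x hx
  have hh0 : 0 < h := by rw [hh]; positivity
  have hnode_succ : ∀ i, node (i + 1) = node i + h := fun i => by
    rw [hnode, hnode]; push_cast; ring
  have hKh : -H + K * h = H := by rw [hh]; field_simp; ring
  obtain ⟨i, hiK, hxi⟩ := exists_lt_mem_Icc_add_mul (a := -H) hK (by rwa [hKh])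
  rw [← hnode, ← Nat.cast_succ, ← hnode] at hxi
  rw [hinterp i hiK x hxi]
  rw [hnode_succ] at hxi ⊢
  exact abs_exp_chord_sub_exp_le hh0 hxi
end

section
/- Let x₀ > 0 and y₀ ∈ ℝ with x₀² + y₀² > 0. Define the CORDIC vectoring iteration: d_k = 1 if y_k ≥ 0 and d_k = −1 otherwise, x_{k+1} = x_k + d_k·2^{−k}·y_k, y_{k+1} = y_k − d_k·2^{−k}·x_k. Then for every n ≥ 1, x_n > 0 and |y_n| ≤ 2^{−(n−1)}·x_n. -/
/-- Convergence of CORDIC vectoring: after `n ≥ 1` steps, `x n` stays strictly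
positive and the residual satisfies `|y n| ≤ 2^(-(n-1)) · x n`. -/
theorem cordic_vectoring_convergence
    (x y : ℕ → ℝ) (hx0 : 0 < x 0) (hxy0 : 0 < (x 0) ^ 2 + (y 0) ^ 2)
    (d : ℕ → ℝ) (hd : ∀ k, d k = if 0 ≤ y k then 1 else -1)
    (hx : ∀ k, x (k + 1) = x k + d k * (2 : ℝ) ^ (-(k : ℤ)) * y k)
    (hy : ∀ k, y (k + 1) = y k - d k * (2 : ℝ) ^ (-(k : ℤ)) * x k) :
    ∀ n, 1 ≤ n → 0 < x n ∧ |y n| ≤ (2 : ℝ) ^ (-((n : ℤ) - 1)) * x n := by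
  have hdy : ∀ k, d k * y k = |y k| := by
    intro k
    rw [hd k]
    split <;> rename_i h
    · rw [abs_of_nonneg h]; ring
    · rw [abs_of_neg (lt_of_not_ge h)]; ring
  have hdd : ∀ k, d k * d k = 1 := by
    intro k; rw [hd k]; split <;> norm_num
  have hxstep : ∀ k, x (k + 1) = x k + (2 : ℝ) ^ (-(k : ℤ)) * |y k| := by
    intro k; rw [hx k, ← hdy k]; ring
  have hxpos : ∀ k, 0 < x k := by
    intro k
    induction k with
    | zero => exact hx0
    | succ k ih =>
      rw [hxstep k]
      have : (0:ℝ) ≤ (2 : ℝ) ^ (-(k : ℤ)) * |y k| :=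
        mul_nonneg (by positivity) (abs_nonneg _)
      linarith
  have hystep : ∀ k, |y (k + 1)| = abs (|y k| - (2 : ℝ) ^ (-(k : ℤ)) * x k) := by
    intro k
    have : y (k + 1) = d k * (d k * y k - (2 : ℝ) ^ (-(k : ℤ)) * x k) := by
      rw [hy k]
      linear_combination (-(y k)) * hdd k
    rw [this, abs_mul, hdy k]
    have : |d k| = 1 := by rw [hd k]; split <;> norm_num
    rw [this, one_mul]
  intro n hn
  induction n, hn using Nat.le_induction with
  | base =>
    refine ⟨hxpos 1, ?_⟩
    rw [hystep 0]
    simp only [Nat.cast_zero, neg_zero, zpow_zero, one_mul]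
    norm_num
    rw [hxstep 0]
    simp only [Nat.cast_zero, neg_zero, zpow_zero, one_mul]
    rw [abs_le]
    constructor <;> [skip; skip] <;>
      cases abs_cases (y 0) <;> cases abs_cases (|y 0| - x 0) <;> linarith [abs_nonneg (y 0), hx0]
  | succ k hk ih =>
    obtain ⟨hxk, hyk⟩ := ih
    refine ⟨hxpos (k + 1), ?_⟩
    have hc : (0:ℝ) < (2 : ℝ) ^ (-(k : ℤ)) := by positivity
    have h2 : ((2:ℝ)) ^ (-((k:ℤ) - 1)) = 2 * (2 : ℝ) ^ (-(k : ℤ)) := by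
      rw [show -((k:ℤ) - 1) = -(k:ℤ) + 1 by ring, zpow_add₀ (by norm_num : (2:ℝ) ≠ 0)]
      ring
    rw [h2] at hyk
    have hexp : (-(((k:ℕ)+1 : ℕ):ℤ) - 1 : ℤ) = -(k:ℤ) ∨ True := Or.inr trivial
    have hcast : (-((((k+1) : ℕ):ℤ) - 1)) = -(k:ℤ) := by push_cast; ring
    rw [hystep k, hcast]
    have hxle : x k ≤ x (k + 1) := by
      rw [hxstep k]
      nlinarith [abs_nonneg (y k), hc]
    rw [abs_le]
    constructor
    · nlinarith [abs_nonneg (y k)]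
    · nlinarith
end

section
/- Let a > 0 and b ∈ ℝ, set r = sqrt(a² + b²), and run n ≥ 1 steps of the CORDIC vectoring iteration from (x₀, y₀) = (a, b): d_k = 1 if y_k ≥ 0 else −1, x_{k+1} = x_k + d_k·2^{−k}·y_k, y_{k+1} = y_k − d_k·2^{−k}·x_k. Let K_n = ∏_{k=0}^{n−1} sqrt(1 + 2^{−2k}). Then 0 ≤ r − K_n^{−1}·x_n ≤ (1 − (1 + 4^{1−n})^{−1/2})·r, and in particular |K_n^{−1}·x_n − r| ≤ 2^{1−2n}·r. -/
/-!
Each vectoring step multiplies the Euclidean norm of `(x, y)` by exactly `√(1 + 4^(-k))`, so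
`√(x_n² + y_n²) = K_n r`; as `x_n ≥ 0`, this already gives `K_n⁻¹ x_n ≤ r`. Since `d_k y_k = |y_k|`,
a step lowers `|y|` by `2^(-k) x_k` (possibly overshooting zero) and raises `x` by `2^(-k) |y_k|`,
which keeps the invariant `|y_{k+1}| ≤ 2^(-k) x_{k+1}`. At the end `y_n² ≤ 4^(1-n) x_n²`, hence
`K_n r ≤ √(1 + 4^(1-n)) x_n`, and `1 - (1 + T)^(-1/2) ≤ T / 2` gives the final bound.
-/

open Finset

lemma abs_sub_mul_le_mul_add_mul {u v t : ℝ} (hu : 0 ≤ u) (ht : 0 ≤ t) (h : u ≤ 2 * t * v) :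
    |u - t * v| ≤ t * (v + t * u) := by
  have htu : 0 ≤ t * t * u := by positivity
  rw [abs_le]; constructor <;> nlinarith

lemma sqrt_sq_add_sq_le_sqrt_one_add_mul {X Y T : ℝ} (hX : 0 ≤ X) (h : Y ^ 2 ≤ T * X ^ 2) :
    √(X ^ 2 + Y ^ 2) ≤ √(1 + T) * X := by
  rw [← Real.sqrt_sq hX, ← Real.sqrt_mul' _ (sq_nonneg X), Real.sqrt_sq hX]
  exact Real.sqrt_le_sqrt (by linarith)

lemma sub_inv_mul_le_one_sub_inv_mul {K S r X : ℝ} (hK : 0 < K) (hS : 0 < S)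
    (h : K * r ≤ S * X) : r - K⁻¹ * X ≤ (1 - S⁻¹) * r := by
  have : S⁻¹ * r ≤ K⁻¹ * X := by
    rwa [le_inv_mul_iff₀ hK, ← mul_assoc, mul_comm K, mul_assoc, inv_mul_le_iff₀ hS]
  linarith

lemma one_sub_inv_sqrt_one_add_le {T : ℝ} (hT : 0 ≤ T) : 1 - (√(1 + T))⁻¹ ≤ T / 2 := by
  have hS : √(1 + T) ≤ 1 + T / 2 := Real.sqrt_le_iff.mpr ⟨by linarith, by nlinarith⟩
  have hS_pos : 0 < √(1 + T) := Real.sqrt_pos.mpr (by linarith)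
  have hmul : (1 - T / 2) * √(1 + T) ≤ 1 := by
    rcases le_or_gt T 2 with hT2 | hT2
    · nlinarith [mul_le_mul_of_nonneg_left hS (show 0 ≤ 1 - T / 2 by linarith)]
    · nlinarith
  have : 1 - T / 2 ≤ (√(1 + T))⁻¹ := by rwa [← one_div, le_div_iff₀ hS_pos]
  linarith

lemma four_zpow_one_sub_succ (m : ℕ) :
    (4 : ℝ) ^ (1 - ((m + 1 : ℕ) : ℤ)) = ((2 : ℝ) ^ (-(m : ℤ))) ^ 2 := by
  rw [← zpow_natCast, ← zpow_mul, show (4 : ℝ) = 2 ^ (2 : ℤ) by norm_num, ← zpow_mul]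
  push_cast; ring_nf

lemma two_zpow_one_sub_two_mul (n : ℕ) :
    (2 : ℝ) ^ (1 - 2 * (n : ℤ)) = (4 : ℝ) ^ (1 - (n : ℤ)) / 2 := by
  rw [show (4 : ℝ) = 2 ^ (2 : ℤ) by norm_num, ← zpow_mul, div_eq_mul_inv, ← zpow_neg_one,
    ← zpow_add₀ two_ne_zero]
  ring_nf

namespace Cordic

structure IsVectoring (x y d : ℕ → ℝ) : Prop where
  d_eq (k : ℕ) : d k = if 0 ≤ y k then 1 else -1
  x_succ (k : ℕ) : x (k + 1) = x k + d k * (2 : ℝ) ^ (-(k : ℤ)) * y k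
  y_succ (k : ℕ) : y (k + 1) = y k - d k * (2 : ℝ) ^ (-(k : ℤ)) * x k

namespace IsVectoring

variable {x y d : ℕ → ℝ}

lemma d_mul_y (h : IsVectoring x y d) (k : ℕ) : d k * y k = |y k| := by
  rw [h.d_eq k]
  split_ifs with hy
  · rw [abs_of_nonneg hy, one_mul]
  · rw [abs_of_neg (not_le.mp hy), neg_one_mul]

lemma abs_d (h : IsVectoring x y d) (k : ℕ) : |d k| = 1 := by
  rw [h.d_eq k]; split_ifs <;> norm_num

lemma d_sq (h : IsVectoring x y d) (k : ℕ) : d k ^ 2 = 1 := by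
  rw [← sq_abs, h.abs_d k, one_pow]

lemma x_succ_eq (h : IsVectoring x y d) (k : ℕ) :
    x (k + 1) = x k + (2 : ℝ) ^ (-(k : ℤ)) * |y k| := by
  rw [h.x_succ k, ← h.d_mul_y k]; ring

lemma abs_y_succ_eq (h : IsVectoring x y d) (k : ℕ) :
    |y (k + 1)| = |(|y k| - (2 : ℝ) ^ (-(k : ℤ)) * x k)| := by
  calc |y (k + 1)| = |d k * (d k * y k - (2 : ℝ) ^ (-(k : ℤ)) * x k)| := by
        rw [h.y_succ k]; congr 1; linear_combination (-y k) * h.d_sq k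
    _ = _ := by rw [abs_mul, h.abs_d k, one_mul, h.d_mul_y k]

lemma x_nonneg (h : IsVectoring x y d) (h0 : 0 ≤ x 0) (k : ℕ) : 0 ≤ x k := by
  induction k with
  | zero => exact h0
  | succ k ih => rw [h.x_succ_eq k]; positivity

lemma abs_y_succ_le (h : IsVectoring x y d) (h0 : 0 ≤ x 0) (k : ℕ) :
    |y (k + 1)| ≤ (2 : ℝ) ^ (-(k : ℤ)) * x (k + 1) := by
  induction k with
  | zero =>
    simpa [h.abs_y_succ_eq 0, h.x_succ_eq 0, add_comm, abs_of_nonneg h0] using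
      abs_sub (|y 0|) (x 0)
  | succ k ih =>
    rw [h.abs_y_succ_eq, h.x_succ_eq (k + 1)]
    refine abs_sub_mul_le_mul_add_mul (abs_nonneg _) (by positivity) ?_
    have h2 : 2 * (2 : ℝ) ^ (-((k + 1 : ℕ) : ℤ)) = (2 : ℝ) ^ (-(k : ℤ)) := by
      simp only [zpow_neg, zpow_natCast, pow_succ]; field_simp
    rwa [h2]

lemma sq_add_sq_succ (h : IsVectoring x y d) (k : ℕ) :
    x (k + 1) ^ 2 + y (k + 1) ^ 2 = (1 + (2 : ℝ) ^ (-(2 * k : ℤ))) * (x k ^ 2 + y k ^ 2) := by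
  have hsq : (2 : ℝ) ^ (-(2 * k : ℤ)) = ((2 : ℝ) ^ (-(k : ℤ))) ^ 2 := by
    rw [← zpow_natCast, ← zpow_mul]; ring_nf
  rw [h.x_succ k, h.y_succ k, hsq]
  linear_combination ((2 : ℝ) ^ (-(k : ℤ))) ^ 2 * (x k ^ 2 + y k ^ 2) * h.d_sq k

lemma sq_add_sq_eq_prod (h : IsVectoring x y d) (n : ℕ) :
    x n ^ 2 + y n ^ 2 =
      (∏ k ∈ range n, (1 + (2 : ℝ) ^ (-(2 * k : ℤ)))) * (x 0 ^ 2 + y 0 ^ 2) := by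
  induction n with
  | zero => simp
  | succ n ih => rw [h.sq_add_sq_succ, ih, prod_range_succ]; ring

lemma sqrt_sq_add_sq_eq_prod (h : IsVectoring x y d) (n : ℕ) :
    √(x n ^ 2 + y n ^ 2) =
      (∏ k ∈ range n, √(1 + (2 : ℝ) ^ (-(2 * k : ℤ)))) * √(x 0 ^ 2 + y 0 ^ 2) := by
  rw [h.sq_add_sq_eq_prod, Real.sqrt_mul (prod_nonneg fun k _ ↦ by positivity),
    Real.sqrt_prod _ fun k _ ↦ by positivity]

end IsVectoring

end Cordic

/-- Pairwise CORDIC relative error bound: after `n ≥ 1` vectoring steps and scale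
correction by `K_n⁻¹`, the output `x n` underestimates `r = sqrt(a² + b²)` by a
relative error at most `1 - (1 + 4^(1-n))^(-1/2) ≤ 2^(1-2n)`. -/
theorem cordic_pairwise_error_bound
    (a b : ℝ) (ha : 0 < a) (r : ℝ) (hr : r = Real.sqrt (a ^ 2 + b ^ 2))
    (x y : ℕ → ℝ) (hx0 : x 0 = a) (hy0 : y 0 = b)
    (d : ℕ → ℝ) (hd : ∀ k, d k = if 0 ≤ y k then 1 else -1)
    (hx : ∀ k, x (k + 1) = x k + d k * (2 : ℝ) ^ (-(k : ℤ)) * y k)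
    (hy : ∀ k, y (k + 1) = y k - d k * (2 : ℝ) ^ (-(k : ℤ)) * x k)
    (n : ℕ) (hn : 1 ≤ n)
    (Kn : ℝ) (hKn : Kn = ∏ k ∈ Finset.range n, Real.sqrt (1 + (2 : ℝ) ^ (-(2 * k : ℤ)))) :
    (0 ≤ r - Kn⁻¹ * x n ∧
      r - Kn⁻¹ * x n ≤ (1 - (1 + (4 : ℝ) ^ (1 - (n : ℤ))) ^ (-(1 / 2) : ℝ)) * r) ∧
    |Kn⁻¹ * x n - r| ≤ (2 : ℝ) ^ (1 - 2 * (n : ℤ)) * r := by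
  have hrun : Cordic.IsVectoring x y d := ⟨hd, hx, hy⟩
  have hx0_nonneg : 0 ≤ x 0 := hx0 ▸ ha.le
  obtain ⟨m, rfl⟩ : ∃ m, n = m + 1 := ⟨n - 1, by omega⟩
  set T : ℝ := (4 : ℝ) ^ (1 - ((m + 1 : ℕ) : ℤ)) with hT
  have hT_nonneg : 0 ≤ T := by positivity
  have hy_sq : y (m + 1) ^ 2 ≤ T * x (m + 1) ^ 2 := by
    rw [hT, four_zpow_one_sub_succ, ← mul_pow, ← sq_abs]
    exact pow_le_pow_left₀ (abs_nonneg _) (hrun.abs_y_succ_le hx0_nonneg m) 2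
  have hK_pos : 0 < Kn := hKn ▸ prod_pos fun k _ ↦ Real.sqrt_pos.mpr (by positivity)
  have hKr : Kn * r = √(x (m + 1) ^ 2 + y (m + 1) ^ 2) := by
    rw [hrun.sqrt_sq_add_sq_eq_prod, hx0, hy0, ← hKn, ← hr]
  have hlow : x (m + 1) ≤ Kn * r := hKr ▸ Real.le_sqrt_of_sq_le (le_add_of_nonneg_right (sq_nonneg _))
  have hup : Kn * r ≤ √(1 + T) * x (m + 1) :=
    hKr ▸ sqrt_sq_add_sq_le_sqrt_one_add_mul (hrun.x_nonneg hx0_nonneg _) hy_sq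
  have h_nonneg : 0 ≤ r - Kn⁻¹ * x (m + 1) := sub_nonneg.mpr ((inv_mul_le_iff₀ hK_pos).mpr hlow)
  have h_rel := sub_inv_mul_le_one_sub_inv_mul hK_pos (Real.sqrt_pos.mpr (by linarith)) hup
  have h_rpow : (1 + T) ^ (-(1 / 2) : ℝ) = (√(1 + T))⁻¹ := by
    rw [Real.rpow_neg (by linarith), Real.sqrt_eq_rpow]
  refine ⟨⟨h_nonneg, h_rpow ▸ h_rel⟩, ?_⟩
  rw [abs_sub_comm, abs_of_nonneg h_nonneg, two_zpow_one_sub_two_mul]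
  exact h_rel.trans (mul_le_mul_of_nonneg_right (one_sub_inv_sqrt_one_add_le hT_nonneg)
    (hr ▸ Real.sqrt_nonneg _))
end

section
/- Let δ ∈ [0, 1) and let m : ℝ × ℝ → ℝ be a function such that for all a, b ≥ 0, m(a,b) ≥ 0 and |m(a,b) − sqrt(a² + b²)| ≤ δ·sqrt(a² + b²). For ℓ ∈ ℕ and v : Fin(2^ℓ) → ℝ with v_j ≥ 0 for all j, define reduce(v) recursively: if ℓ = 0 then reduce(v) = v₀; otherwise reduce(v) = reduce(w) where w : Fin(2^{ℓ−1}) → ℝ is given by w_j = m(v_{2j}, v_{2j+1}). Then |reduce(v) − ‖v‖₂| ≤ ((1 + δ)^ℓ − 1)·‖v‖₂, where ‖v‖₂ = sqrt(Σ_j v_j²). -/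
/-!
One level of the tree turns `v` into the merged vector `w`, while the exact pairwise norms `u`
have the same Euclidean norm as `v`. Since `|w j - u j| ≤ δ * u j`, the triangle inequality in
`ℓ²` gives `|‖w‖ - ‖v‖| ≤ δ‖v‖`, in particular `‖w‖ ≤ (1 + δ)‖v‖`. By induction the rest of the
tree is off by at most `((1 + δ)^ℓ - 1)‖w‖`, and adding the two errors gives
`((1 + δ)^ℓ - 1)(1 + δ)‖v‖ + δ‖v‖ = ((1 + δ)^(ℓ + 1) - 1)‖v‖`.
-/

open Finset

/-- Binary-tree reduction of a vector of length `2^ℓ` using a pairwise merge `m`. -/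
noncomputable def treeReduce (m : ℝ → ℝ → ℝ) : (ℓ : ℕ) → (Fin (2 ^ ℓ) → ℝ) → ℝ
  | 0, v => v ⟨0, by norm_num⟩
  | ℓ + 1, v => treeReduce m ℓ (fun j =>
      m (v ⟨2 * j.val, by
            have hj := j.isLt
            have h2 : (2 : ℕ) ^ (ℓ + 1) = 2 * 2 ^ ℓ := by rw [pow_succ]; ring
            omega⟩)
        (v ⟨2 * j.val + 1, by
            have hj := j.isLt
            have h2 : (2 : ℕ) ^ (ℓ + 1) = 2 * 2 ^ ℓ := by rw [pow_succ]; ring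
            omega⟩))

def mergePairs {α β : Type*} {ℓ : ℕ} (f : α → α → β) (v : Fin (2 ^ (ℓ + 1)) → α)
    (j : Fin (2 ^ ℓ)) : β :=
  f (v ⟨2 * j, by rw [pow_succ]; omega⟩) (v ⟨2 * j + 1, by rw [pow_succ]; omega⟩)

theorem sum_fin_mul_two {M : Type*} [AddCommMonoid M] {n : ℕ} (f : Fin (n * 2) → M) :
    ∑ i, f i = ∑ j : Fin n, (f ⟨2 * j, by omega⟩ + f ⟨2 * j + 1, by omega⟩) := by
  rw [← finProdFinEquiv.sum_comp, Fintype.sum_prod_type]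
  refine sum_congr rfl fun j _ => ?_
  simp [Fin.sum_univ_two, finProdFinEquiv, add_comm]

theorem treeReduce_succ (m : ℝ → ℝ → ℝ) (ℓ : ℕ) (v : Fin (2 ^ (ℓ + 1)) → ℝ) :
    treeReduce m (ℓ + 1) v = treeReduce m ℓ (mergePairs m v) := rfl

theorem sum_sq_mergePairs_hypot {ℓ : ℕ} (v : Fin (2 ^ (ℓ + 1)) → ℝ) :
    ∑ j, mergePairs (fun a b => √(a ^ 2 + b ^ 2)) v j ^ 2 = ∑ i, v i ^ 2 :=
  (sum_congr rfl fun _ _ => Real.sq_sqrt (by positivity)).trans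
    (sum_fin_mul_two (n := 2 ^ ℓ) fun i => v i ^ 2).symm

theorem abs_sqrt_sum_sq_sub_le {ι : Type*} [Fintype ι] {u w ε : ι → ℝ}
    (h : ∀ i, |w i - u i| ≤ ε i) :
    |√(∑ i, w i ^ 2) - √(∑ i, u i ^ 2)| ≤ √(∑ i, ε i ^ 2) := by
  have key := abs_norm_sub_norm_le (WithLp.toLp 2 w : EuclideanSpace ℝ ι) (WithLp.toLp 2 u)
  simp only [EuclideanSpace.norm_eq, Real.norm_eq_abs, sq_abs] at key
  refine key.trans (Real.sqrt_le_sqrt (sum_le_sum fun i _ => ?_))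
  simpa using pow_le_pow_left₀ (abs_nonneg _) (h i) 2

theorem abs_sqrt_sum_sq_sub_le_mul {ι : Type*} [Fintype ι] {u w : ι → ℝ} {δ : ℝ} (hδ : 0 ≤ δ)
    (h : ∀ i, |w i - u i| ≤ δ * u i) :
    |√(∑ i, w i ^ 2) - √(∑ i, u i ^ 2)| ≤ δ * √(∑ i, u i ^ 2) := by
  calc _ ≤ √(∑ i, (δ * u i) ^ 2) := abs_sqrt_sum_sq_sub_le h
    _ = δ * √(∑ i, u i ^ 2) := by
      simp_rw [mul_pow, ← mul_sum, Real.sqrt_mul (sq_nonneg δ), Real.sqrt_sq hδ]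

theorem treeReduce_norm_error_general
    (δ : ℝ) (hδ0 : 0 ≤ δ) (m : ℝ → ℝ → ℝ)
    (hm : ∀ a b : ℝ, 0 ≤ a → 0 ≤ b →
      0 ≤ m a b ∧ |m a b - Real.sqrt (a ^ 2 + b ^ 2)| ≤ δ * Real.sqrt (a ^ 2 + b ^ 2))
    (ℓ : ℕ) (v : Fin (2 ^ ℓ) → ℝ) (hv : ∀ j, 0 ≤ v j) :
    |treeReduce m ℓ v - Real.sqrt (∑ j, (v j) ^ 2)| ≤
      ((1 + δ) ^ ℓ - 1) * Real.sqrt (∑ j, (v j) ^ 2) := by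
  induction ℓ with
  | zero => simp [treeReduce, Real.sqrt_sq (hv 0)]
  | succ ℓ ih =>
    set u := mergePairs (fun a b => √(a ^ 2 + b ^ 2)) v
    set w := mergePairs m v
    have hw : ∀ j, 0 ≤ w j := fun j => (hm _ _ (hv _) (hv _)).1
    have hwu : |√(∑ j, w j ^ 2) - √(∑ j, u j ^ 2)| ≤ δ * √(∑ j, u j ^ 2) :=
      abs_sqrt_sum_sq_sub_le_mul hδ0 fun j => (hm _ _ (hv _) (hv _)).2
    have hgrow : √(∑ j, w j ^ 2) ≤ (1 + δ) * √(∑ j, u j ^ 2) := by linarith [(abs_le.1 hwu).2]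
    have hpow : 0 ≤ (1 + δ) ^ ℓ - 1 := sub_nonneg.2 (one_le_pow₀ (by linarith))
    rw [treeReduce_succ, ← sum_sq_mergePairs_hypot v]
    calc |treeReduce m ℓ w - √(∑ j, u j ^ 2)|
        ≤ |treeReduce m ℓ w - √(∑ j, w j ^ 2)| + |√(∑ j, w j ^ 2) - √(∑ j, u j ^ 2)| :=
          abs_sub_le _ _ _
      _ ≤ ((1 + δ) ^ ℓ - 1) * ((1 + δ) * √(∑ j, u j ^ 2)) + δ * √(∑ j, u j ^ 2) := by
          gcongr
          exact (ih w hw).trans (mul_le_mul_of_nonneg_left hgrow hpow)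
      _ = ((1 + δ) ^ (ℓ + 1) - 1) * √(∑ j, u j ^ 2) := by ring

/-- Binary-tree CORDIC accumulation error: if each pairwise merge approximates
`(a, b) ↦ sqrt (a² + b²)` with relative error at most `δ` on nonnegative inputs
(and yields nonnegative outputs), then the tree reduction of height `ℓ` approximates
the Euclidean norm with relative error at most `(1 + δ)^ℓ - 1`. -/
theorem treeReduce_norm_error
    (δ : ℝ) (hδ0 : 0 ≤ δ) (hδ1 : δ < 1) (m : ℝ → ℝ → ℝ)
    (hm : ∀ a b : ℝ, 0 ≤ a → 0 ≤ b →
      0 ≤ m a b ∧ |m a b - Real.sqrt (a ^ 2 + b ^ 2)| ≤ δ * Real.sqrt (a ^ 2 + b ^ 2))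
    (ℓ : ℕ) (v : Fin (2 ^ ℓ) → ℝ) (hv : ∀ j, 0 ≤ v j) :
    |treeReduce m ℓ v - Real.sqrt (∑ j, (v j) ^ 2)| ≤
      ((1 + δ) ^ ℓ - 1) * Real.sqrt (∑ j, (v j) ^ 2) :=
  treeReduce_norm_error_general δ hδ0 m hm ℓ v hv
end

section
/- Let θ > 0 be a real number, T a natural number, and I : Fin T → ℝ with I_t ≥ 0 for all t. Define u₀ = 0 and, for t = 1, …, T, s_t = ⌊(u_{t−1} + I_t)/θ⌋ and u_t = u_{t−1} + I_t − s_t·θ. Then Σ_{t=1}^T s_t = ⌊(Σ_{t=1}^T I_t)/θ⌋. -/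
/-! Reset by subtraction never discards charge: telescoping the membrane update gives
`Σ I = u_T + θ · Σ s`, and the last update leaves the residual `u_T` in `[0, θ)` (as does
`u₀ = 0` when `T = 0`). So `Σ s` is the quotient of `Σ I` by `θ` and `u_T` its remainder. -/

theorem Int.floor_add_intCast_mul_div {θ r : ℝ} (k : ℤ) (hθ : 0 < θ) (hr : r ∈ Set.Ico 0 θ) :
    ⌊(r + k * θ) / θ⌋ = k := by
  rw [add_div, mul_div_cancel_right₀ _ hθ.ne', Int.floor_add_intCast,
    Int.floor_eq_zero_iff.mpr ⟨div_nonneg hr.1 hθ.le, (div_lt_one hθ).mpr hr.2⟩, zero_add]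

theorem Int.sub_floor_div_mul_mem_Ico {θ : ℝ} (x : ℝ) (hθ : 0 < θ) :
    x - ⌊x / θ⌋ * θ ∈ Set.Ico 0 θ :=
  ⟨Int.sub_floor_div_mul_nonneg x hθ, Int.sub_floor_div_mul_lt x hθ⟩

theorem Fin.sum_univ_sub_succ {M : Type*} [AddCommGroup M] (f : ℕ → M) (n : ℕ) :
    ∑ i : Fin n, (f (i + 1) - f i) = f n - f 0 := by
  rw [Fin.sum_univ_eq_sum_range (fun i => f (i + 1) - f i), Finset.sum_range_sub]

theorem division_neuron_decoding_general
    (θ : ℝ) (hθ : 0 < θ) (T : ℕ) (I : Fin T → ℝ)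
    (u : ℕ → ℝ) (s : ℕ → ℤ)
    (hu0 : u 0 = 0)
    (hs : ∀ t : Fin T, s ((t : ℕ) + 1) = ⌊(u (t : ℕ) + I t) / θ⌋)
    (hu : ∀ t : Fin T, u ((t : ℕ) + 1) = u (t : ℕ) + I t - (s ((t : ℕ) + 1) : ℝ) * θ) :
    (∑ t : Fin T, s ((t : ℕ) + 1)) = ⌊(∑ t, I t) / θ⌋ := by
  have conservation : ∑ t, I t = u T + ((∑ t : Fin T, s ((t : ℕ) + 1) : ℤ) : ℝ) * θ := by
    have telescope := Fin.sum_univ_sub_succ u T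
    simp only [hu, Finset.sum_sub_distrib, Finset.sum_add_distrib, hu0, sub_zero] at telescope
    push_cast [Finset.sum_mul]
    linarith
  have residual : u T ∈ Set.Ico 0 θ := by
    cases T with
    | zero => simpa [hu0] using hθ
    | succ m =>
      have last := hu (Fin.last m)
      rw [hs (Fin.last m), Fin.val_last] at last
      exact last ▸ Int.sub_floor_div_mul_mem_Ico _ hθ
  rw [conservation, Int.floor_add_intCast_mul_div _ hθ residual]

/-- Division neuron decoding identity: an integrate-and-fire neuron with threshold
`θ > 0`, soft reset, and no leak, driven by nonnegative inputs, emits over `T`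
timesteps a total spike count equal to `⌊(Σ I) / θ⌋`. -/
theorem division_neuron_decoding
    (θ : ℝ) (hθ : 0 < θ) (T : ℕ) (I : Fin T → ℝ) (hI : ∀ t, 0 ≤ I t)
    (u : ℕ → ℝ) (s : ℕ → ℤ)
    (hu0 : u 0 = 0)
    (hs : ∀ t : Fin T, s ((t : ℕ) + 1) = ⌊(u (t : ℕ) + I t) / θ⌋)
    (hu : ∀ t : Fin T, u ((t : ℕ) + 1) = u (t : ℕ) + I t - (s ((t : ℕ) + 1) : ℝ) * θ) :
    (∑ t : Fin T, s ((t : ℕ) + 1)) = ⌊(∑ t, I t) / θ⌋ :=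
  division_neuron_decoding_general θ hθ T I u s hu0 hs hu
end

section
/- Let A, B, n be natural numbers with B > 2^n, and set θ = ⌊B/2^n⌋ (so θ ≥ 1). Then |(⌊A/θ⌋)/2^n − A/B| ≤ A·2^n/(B·(B − 2^n)) + 2^{−n}, where the quotient ⌊A/θ⌋ is natural-number division and the other operations are over the reals. -/
/-!
With `q = ⌊A/θ⌋`, write `q/2ⁿ - A/B = (q - A/θ)/2ⁿ + (A/(θ·2ⁿ) - A/B)`. The first term is the
floor error, in `(-2⁻ⁿ, 0]`. The second is the threshold error: since `B - 2ⁿ < θ·2ⁿ ≤ B`, it lies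
in `[0, A·2ⁿ/(B(B - 2ⁿ))]`.
-/

theorem div_sub_div_le_of_sub_lt_of_le {K : Type*} [Field K] [LinearOrder K] [IsStrictOrderedRing K]
    {a b t m : K} (ha : 0 ≤ a) (hm : 0 < b - m) (hmt : b - m < t) (htb : t ≤ b) :
    a / t - a / b ≤ a * m / (b * (b - m)) := by
  have ht : 0 < t := hm.trans hmt
  have hb : 0 < b := ht.trans_le htb
  have hm0 : 0 ≤ m := by linarith
  calc a / t - a / b = a * (b - t) / (t * b) := by field_simp
    _ ≤ a * m / ((b - m) * b) := by gcongr; linarith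
    _ = a * m / (b * (b - m)) := by rw [mul_comm (b - m)]

theorem Nat.cast_div_sub_one_lt (a d : ℕ) : (a : ℝ) / d - 1 < (a / d : ℕ) := by
  rw [← Nat.floor_div_eq_div (K := ℝ)]
  exact Nat.sub_one_lt_floor _

/-- Accuracy of the shift-based integer division scheme of the division neuron group:
with threshold `θ = ⌊B / 2^n⌋` (where `B > 2^n`), the decoded value `⌊A/θ⌋ / 2^n`
approximates the real quotient `A/B` up to `A·2^n/(B·(B - 2^n)) + 2⁻ⁿ`. -/
theorem shift_based_integer_division_accuracy
    (A B n : ℕ) (hB : 2 ^ n < B) (θ : ℕ) (hθ : θ = B / 2 ^ n) :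
    |((A / θ : ℕ) : ℝ) / 2 ^ n - (A : ℝ) / (B : ℝ)| ≤
      (A : ℝ) * 2 ^ n / ((B : ℝ) * ((B : ℝ) - 2 ^ n)) + (2 : ℝ) ^ (-(n : ℤ)) := by
  have hθ_le : (θ : ℝ) * 2 ^ n ≤ B := by exact_mod_cast hθ ▸ Nat.div_mul_le_self B (2 ^ n)
  have hθ_gt : (B : ℝ) - 2 ^ n < θ * 2 ^ n := by
    rw [sub_lt_iff_lt_add]
    exact_mod_cast hθ ▸ Nat.lt_div_mul_add (a := B) (Nat.two_pow_pos n)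
  have hBn : (0 : ℝ) < B - 2 ^ n := sub_pos.2 (by exact_mod_cast hB)
  have h2n : (0 : ℝ) < 2 ^ n := by positivity
  have hthreshold_nonneg : 0 ≤ (A : ℝ) / (θ * 2 ^ n) - A / B :=
    sub_nonneg.2 (div_le_div_of_nonneg_left A.cast_nonneg (hBn.trans hθ_gt) hθ_le)
  have hthreshold_le := div_sub_div_le_of_sub_lt_of_le A.cast_nonneg hBn hθ_gt hθ_le
  have hquot_le : ((A / θ : ℕ) - (A : ℝ) / θ) / 2 ^ n ≤ 0 :=
    div_nonpos_of_nonpos_of_nonneg (sub_nonpos.2 Nat.cast_div_le) h2n.le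
  have hquot_gt : -1 / 2 ^ n < ((A / θ : ℕ) - (A : ℝ) / θ) / 2 ^ n :=
    div_lt_div_of_pos_right (by linarith [Nat.cast_div_sub_one_lt A θ]) h2n
  have hsplit : ((A / θ : ℕ) : ℝ) / 2 ^ n - A / B
      = ((A / θ : ℕ) - (A : ℝ) / θ) / 2 ^ n + ((A : ℝ) / (θ * 2 ^ n) - A / B) := by
    rw [← div_div]; ring
  rw [hsplit, zpow_neg, zpow_natCast, abs_le, ← one_div]
  constructor <;> linarith [neg_div (2 ^ n : ℝ) 1]
end
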